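/- Let V₁, …, V_t be a finite open cover of X such that the restriction of T to each V_i is injective, let v₁, …, v_t : X → [0,1] be a continuous partition of unity subordinate to this cover, and set uᵢ = ((ℒ(1)∘T)·vᵢ)^{1/2}. Then Σ_{i=1}^{t} M̃_{uᵢ} S̃ S̃* M̃_{uᵢ} = 1 as bounded operators on ℓ²(X×ℤ). -/

import Mathlib

open Classical

noncomputable section

/-- `ℓ²(X×ℤ)`: the Hilbert space of square-summable complex families indexed by `X × ℤ`. -/
abbrev l2Z (X : Type*) : Type _ := lp (fun _ : X × ℤ => ℂ) 2

/-- The orthonormal basis vector `e_{(x,n)}` of `ℓ²(X×ℤ)`. -/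
def e {X : Type*} (p : X × ℤ) : l2Z X := lp.single 2 p 1

end

/-
`S̃*` sends `e_{(x,n)}` to `ℒ(1)(Tx)^{-1/2} e_{(Tx,n-1)}`, so
`M̃_{uᵢ} S̃ S̃* M̃_{uᵢ} e_{(x,n)} = ∑_{Ty = Tx} √(vᵢ x) √(vᵢ y) e_{(y,n)}`: the factor `ℒ(1)∘T`
in `uᵢ` cancels the normalisation of `S̃`. For `y ≠ x` in the fiber of `Tx` the product
`vᵢ x · vᵢ y` vanishes, since `T` is injective on `Vᵢ ⊇ supp vᵢ`; summing over `i` leaves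
`∑ᵢ vᵢ x · e_{(x,n)} = e_{(x,n)}`.
-/

open scoped ComplexInnerProductSpace

section Basis

variable {X : Type*}

theorem e_apply (p q : X × ℤ) : e p q = if q = p then 1 else 0 := by
  simp [e, lp.single_apply, Pi.single_apply]

theorem inner_e_left (q : X × ℤ) (f : l2Z X) : ⟪e q, f⟫ = f q := by
  simp [e, lp.inner_single_left]

theorem hasSum_smul_e (f : l2Z X) : HasSum (fun p => f p • e p) f := by
  convert lp.hasSum_single (p := 2) ENNReal.ofNat_ne_top f using 2 with p
  rw [e, ← lp.single_smul, smul_eq_mul, mul_one]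

theorem ext_e {A B : l2Z X →L[ℂ] l2Z X} (h : ∀ p, A (e p) = B (e p)) : A = B := by
  ext f : 1
  refine ((hasSum_smul_e f).mapL A).unique ?_
  simpa only [map_smul, h] using (hasSum_smul_e f).mapL B

theorem adjoint_apply_e (A : l2Z X →L[ℂ] l2Z X) (f : l2Z X) (q : X × ℤ) :
    ContinuousLinearMap.adjoint A f q = ⟪A (e q), f⟫ := by
  rw [← inner_e_left, ContinuousLinearMap.adjoint_inner_right]

theorem sum_e_apply (s : Finset X) (k : ℤ) (q : X × ℤ) :
    (∑ y ∈ s, e (y, k)) q = if q.1 ∈ s ∧ q.2 = k then 1 else 0 := by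
  obtain ⟨x, n⟩ := q
  rw [lp.coeFn_sum, Finset.sum_apply]
  simp only [e_apply, Prod.mk.injEq]
  by_cases hn : n = k <;> simp [hn]

end Basis

theorem IsCoveringMap.finite_preimage_singleton {E B : Type*} [TopologicalSpace E]
    [TopologicalSpace B] [CompactSpace E] [T1Space B] {T : E → B} (hT : IsCoveringMap T)
    (x : B) : (T ⁻¹' {x}).Finite :=
  (isClosed_singleton.preimage hT.continuous).isCompact.finite
    (isDiscrete_iff_discreteTopology.mpr (hT x).discreteTopology_fiber)

section WeightedShift

variable {X : Type*} {T : X → X} (hfin : ∀ x, (T ⁻¹' {x}).Finite) {c : X → ℝ}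
  {St : l2Z X →L[ℂ] l2Z X}
  (hSt : ∀ (x : X) (n : ℤ), St (e (x, n)) = (c x : ℂ) • ∑ᶠ y ∈ T ⁻¹' {x}, e (y, n + 1))
include hfin hSt

theorem St_e_eq_sum (x : X) (n : ℤ) :
    St (e (x, n)) = (c x : ℂ) • ∑ y ∈ (hfin x).toFinset, e (y, n + 1) := by
  rw [hSt, finsum_mem_eq_finite_toFinset_sum]

theorem St_e_apply (x : X) (n : ℤ) (q : X × ℤ) :
    St (e (x, n)) q = if T q.1 = x ∧ q.2 = n + 1 then (c x : ℂ) else 0 := by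
  rw [St_e_eq_sum hfin hSt, lp.coeFn_smul, Pi.smul_apply, sum_e_apply]
  simp [Set.Finite.mem_toFinset]

theorem adjointSt_e (x : X) (n : ℤ) :
    ContinuousLinearMap.adjoint St (e (x, n)) = (c (T x) : ℂ) • e (T x, n - 1) := by
  ext ⟨y, m⟩
  rw [adjoint_apply_e, ← inner_conj_symm, inner_e_left, St_e_apply hfin hSt, lp.coeFn_smul,
    Pi.smul_apply, e_apply]
  by_cases h : y = T x ∧ m = n - 1
  · obtain ⟨rfl, rfl⟩ := h
    simp [Complex.conj_ofReal]
  · have h' : ¬(T x = y ∧ n = m + 1) := fun ⟨h1, h2⟩ => h ⟨h1.symm, by omega⟩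
    simp [Prod.ext_iff, h, h']

theorem Mu_St_adjointSt_Mu_e {Mu : l2Z X →L[ℂ] l2Z X} {u : X → ℝ}
    (hMu : ∀ p : X × ℤ, Mu (e p) = (u p.1 : ℂ) • e p) (x : X) (n : ℤ) :
    (Mu ∘L St ∘L ContinuousLinearMap.adjoint St ∘L Mu) (e (x, n)) =
      ∑ y ∈ (hfin (T x)).toFinset, ((u x * c (T x) ^ 2 * u y : ℝ) : ℂ) • e (y, n) := by
  simp only [ContinuousLinearMap.comp_apply, hMu, map_smul, adjointSt_e hfin hSt,
    St_e_eq_sum hfin hSt, sub_add_cancel, map_sum, Finset.smul_sum, smul_smul]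
  refine Finset.sum_congr rfl fun y _ => ?_
  congr 1
  push_cast
  ring

end WeightedShift

section PartitionOfUnity

variable {X ι : Type*} {T : X → X} {V : ι → Set X} {v : ι → X → ℝ}

theorem mul_eq_zero_of_injOn {M₀ : Type*} [MulZeroClass M₀] {f : X → M₀} {U : Set X}
    (hf : Function.support f ⊆ U) (hU : Set.InjOn T U) {x y : X} (hxy : T y = T x)
    (hne : y ≠ x) : f x * f y = 0 := by
  rcases eq_or_ne (f x) 0 with hx | hx
  · rw [hx, zero_mul]
  · have hy : f y = 0 := by_contra fun hy => hne (hU (hf hy) (hf hx) hxy)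
    rw [hy, mul_zero]

theorem sum_sqrt_mul_sqrt_eq_ite [Fintype ι] (hv0 : ∀ i x, 0 ≤ v i x)
    (hvsum : ∀ x, ∑ i, v i x = 1) (hvsupp : ∀ i, Function.support (v i) ⊆ V i)
    (hVinj : ∀ i, Set.InjOn T (V i)) {x y : X} (hxy : T y = T x) :
    ∑ i, √(v i x) * √(v i y) = if y = x then 1 else 0 := by
  split_ifs with h
  · subst h
    simp_rw [Real.mul_self_sqrt (hv0 _ _), hvsum]
  · refine Finset.sum_eq_zero fun i _ => ?_
    rw [← Real.sqrt_mul (hv0 i x), mul_eq_zero_of_injOn (hvsupp i) (hVinj i) hxy h,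
      Real.sqrt_zero]

end PartitionOfUnity

open ContinuousLinearMap in
theorem sum_Mu_St_adjointSt_Mu_eq_one_general {X : Type*} [TopologicalSpace X] [CompactSpace X]
    [T2Space X] (T : X → X) (hT : IsCoveringMap T) (hTsurj : Function.Surjective T)
    (St : l2Z X →L[ℂ] l2Z X)
    (hSt : ∀ (x : X) (n : ℤ), St (e (x, n)) =
      (((Real.sqrt (Nat.card (T ⁻¹' {x})))⁻¹ : ℝ) : ℂ) • ∑ᶠ y ∈ T ⁻¹' {x}, e (y, n + 1))
    (t : ℕ) (V : Fin t → Set X)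
    (hVinj : ∀ i, Set.InjOn T (V i))
    (v : Fin t → C(X, ℝ)) (hv01 : ∀ i x, v i x ∈ Set.Icc (0 : ℝ) 1)
    (hvsum : ∀ x : X, ∑ i, v i x = 1) (hvsupp : ∀ i, tsupport (v i) ⊆ V i)
    (Mu : Fin t → (l2Z X →L[ℂ] l2Z X))
    (hMu : ∀ i (p : X × ℤ), Mu i (e p) =
      ((Real.sqrt ((Nat.card (T ⁻¹' {T p.1}) : ℝ) * v i p.1) : ℝ) : ℂ) • e p) :
    ∑ i, Mu i ∘L St ∘L (adjoint St) ∘L Mu i = 1 := by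
  have hfin := hT.finite_preimage_singleton
  have hcard (x : X) : 0 < (Nat.card (T ⁻¹' {x}) : ℝ) := by
    rw [Nat.card_coe_set_eq]
    exact_mod_cast (Set.ncard_pos (hfin x)).mpr (hTsurj x)
  refine ext_e fun ⟨x, n⟩ => ?_
  have hcoef : ∀ i, ∀ y ∈ (hfin (T x)).toFinset,
      √(Nat.card (T ⁻¹' {T x}) * v i x) * (√(Nat.card (T ⁻¹' {T x})))⁻¹ ^ 2 *
        √(Nat.card (T ⁻¹' {T y}) * v i y) = √(v i x) * √(v i y) := by
    intro i y hy
    have hsqrt : √(Nat.card (T ⁻¹' {T x}) : ℝ) ≠ 0 := (Real.sqrt_pos.mpr (hcard _)).ne'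
    rw [(hfin (T x)).mem_toFinset.mp hy, Real.sqrt_mul (hcard _).le, Real.sqrt_mul (hcard _).le]
    field_simp
  calc (∑ i, Mu i ∘L St ∘L adjoint St ∘L Mu i) (e (x, n))
      = ∑ i, ∑ y ∈ (hfin (T x)).toFinset, ((√(v i x) * √(v i y) : ℝ) : ℂ) • e (y, n) := by
        rw [sum_apply]
        refine Finset.sum_congr rfl fun i _ => ?_
        rw [Mu_St_adjointSt_Mu_e hfin hSt
          (u := fun x => √(Nat.card (T ⁻¹' {T x}) * v i x)) (hMu i)]
        exact Finset.sum_congr rfl fun y hy => by rw [hcoef i y hy]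
    _ = ∑ y ∈ (hfin (T x)).toFinset, ((∑ i, √(v i x) * √(v i y) : ℝ) : ℂ) • e (y, n) := by
        rw [Finset.sum_comm]
        simp only [Complex.ofReal_sum, Finset.sum_smul]
    _ = e (x, n) := by
        rw [Finset.sum_congr rfl fun y hy => by
          rw [sum_sqrt_mul_sqrt_eq_ite (fun i x => (hv01 i x).1) hvsum
            (fun i => (subset_tsupport _).trans (hvsupp i)) hVinj
            ((hfin (T x)).mem_toFinset.mp hy)]]
        simp [apply_ite, Finset.sum_ite_eq']

open ContinuousLinearMap in
/-- Let `X` be a compact Hausdorff space, `T : X → X` a covering map and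
`S̃` the bounded operator on `ℓ²(X×ℤ)` with
`S̃ e_{(x,n)} = (ℒ(1)(x))^{-1/2} ∑_{y ∈ T⁻¹({x})} e_{(y,n+1)}`. Let `V₁, …, V_t` be a
finite open cover of `X` on each member of which `T` is injective, let `v₁, …, v_t` be a
continuous partition of unity subordinate to it, and put `uᵢ = ((ℒ(1)∘T)·vᵢ)^{1/2}`.
Then `∑ᵢ M̃_{uᵢ} S̃ S̃* M̃_{uᵢ} = 1` on `ℓ²(X×ℤ)`. -/
theorem sum_Mu_St_adjointSt_Mu_eq_one {X : Type*} [TopologicalSpace X] [CompactSpace X]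
    [T2Space X] (T : X → X) (hT : IsCoveringMap T) (hTsurj : Function.Surjective T)
    (St : l2Z X →L[ℂ] l2Z X)
    (hSt : ∀ (x : X) (n : ℤ), St (e (x, n)) =
      (((Real.sqrt (Nat.card (T ⁻¹' {x})))⁻¹ : ℝ) : ℂ) • ∑ᶠ y ∈ T ⁻¹' {x}, e (y, n + 1))
    (t : ℕ) (V : Fin t → Set X) (hVopen : ∀ i, IsOpen (V i))
    (hVcover : (⋃ i, V i) = Set.univ) (hVinj : ∀ i, Set.InjOn T (V i))
    (v : Fin t → C(X, ℝ)) (hv01 : ∀ i x, v i x ∈ Set.Icc (0 : ℝ) 1)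
    (hvsum : ∀ x : X, ∑ i, v i x = 1) (hvsupp : ∀ i, tsupport (v i) ⊆ V i)
    (Mu : Fin t → (l2Z X →L[ℂ] l2Z X))
    (hMu : ∀ i (p : X × ℤ), Mu i (e p) =
      ((Real.sqrt ((Nat.card (T ⁻¹' {T p.1}) : ℝ) * v i p.1) : ℝ) : ℂ) • e p) :
    ∑ i, Mu i ∘L St ∘L (adjoint St) ∘L Mu i = 1 :=
  sum_Mu_St_adjointSt_Mu_eq_one_general T hT hTsurj St hSt t V hVinj v hv01 hvsum hvsupp Mu hMu
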